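/- arXiv:2505.02729 — 3 statements merged into one kernel-verified Lean document; each statement's English description precedes it below -/
import Mathlib

section
/- The relative interior of the max-front polyhedron P^{f⋆} is contained in the lex-polyhedron P^lex, and P^lex is contained in P^{f⋆}; equivalently, P^{f⋆} is the topological closure of P^lex. -/
/-- The space of points `(x, s)` of a lex-polyhedron in standard form, with
slack blocks `s i : Fin (d i) → ℝ`. -/
abbrev Pt (m N : ℕ) (d : Fin m → ℕ) : Type :=
  (Fin N → ℝ) × ((i : Fin m) → Fin (d i) → ℝ)

/-- The equality constraints `A x + s = b`. -/
def satEq (m N : ℕ) (d : Fin m → ℕ)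
    (A : (i : Fin m) → Fin (d i) → Fin N → ℝ)
    (b : (i : Fin m) → Fin (d i) → ℝ) (p : Pt m N d) : Prop :=
  ∀ i j, (∑ k, A i j k * p.1 k) + p.2 i j = b i j

/-- Lexicographic nonnegativity: `v = 0` or the first nonzero entry of `v` is
positive. -/
def lexNonneg (n : ℕ) (v : Fin n → ℝ) : Prop :=
  v = 0 ∨ ∃ j, (∀ k, k < j → v k = 0) ∧ 0 < v j

/-- The lex-polyhedron `P^lex` in standard form. -/
def Plex (m N : ℕ) (d : Fin m → ℕ)
    (A : (i : Fin m) → Fin (d i) → Fin N → ℝ)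
    (b : (i : Fin m) → Fin (d i) → ℝ) : Set (Pt m N d) :=
  {p | satEq m N d A b p ∧ ∀ i, lexNonneg (d i) (p.2 i)}

/-- A front (0-based): `f i ∈ {0, …, d i}` for each `i`. -/
def IsFront (m : ℕ) (d : Fin m → ℕ) (f : Fin m → ℕ) : Prop :=
  ∀ i, f i ≤ d i

/-- The closed convex polyhedron `P^f` associated with a front `f`: the first
`f i` slacks of block `i` vanish, and the next one (if any) is nonnegative. -/
def Pfront (m N : ℕ) (d : Fin m → ℕ)
    (A : (i : Fin m) → Fin (d i) → Fin N → ℝ)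
    (b : (i : Fin m) → Fin (d i) → ℝ) (f : Fin m → ℕ) : Set (Pt m N d) :=
  {p | satEq m N d A b p ∧ (∀ i, ∀ j : Fin (d i), (j : ℕ) < f i → p.2 i j = 0) ∧
    (∀ i, ∀ h : f i < d i, 0 ≤ p.2 i ⟨f i, h⟩)}

/-- The defining property of the max-front `f⋆`. -/
def IsMaxFront (m N : ℕ) (d : Fin m → ℕ)
    (A : (i : Fin m) → Fin (d i) → Fin N → ℝ)
    (b : (i : Fin m) → Fin (d i) → ℝ) (fstar : Fin m → ℕ) : Prop :=
  ∀ i, IsGreatest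
    {j | j ≤ d i ∧ ∀ p ∈ Plex m N d A b, ∀ k : Fin (d i), (k : ℕ) < j → p.2 i k = 0}
    (fstar i)

/-! By maximality of `f⋆`, every block `i` with `f⋆ i < d i` has a point of `P^lex` whose slack
at position `f⋆ i` is positive; averaging these gives one `q ∈ P^{f⋆}` positive at every such
position. Every point of the open segment from any `p ∈ P^{f⋆}` to `q` then has its first
nonzero slack of each block at the front and positive, so lies in `P^lex`; hence `p` is a limit
of points of `P^lex`. A point `p` of the relative interior even lies on such an open segment,
the one from `q` to a point of `P^{f⋆}` slightly beyond `p` on the line through `q` and `p`. -/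

open Topology

theorem lexNonneg.nonneg_of_forall_lt_eq_zero {n : ℕ} {v : Fin n → ℝ} (hv : lexNonneg n v)
    {j : Fin n} (hj : ∀ k < j, v k = 0) : 0 ≤ v j := by
  rcases hv with rfl | ⟨j₀, hzero, hpos⟩
  · rfl
  · rcases lt_trichotomy j j₀ with hlt | rfl | hgt
    · exact (hzero j hlt).ge
    · exact hpos.le
    · exact absurd (hj j₀ hgt) hpos.ne'

theorem exists_forall_pos_of_concaveOn {E ι : Type*} [AddCommGroup E] [Module ℝ E] [Fintype ι]
    {S : Set E} (hne : S.Nonempty) {φ : ι → E → ℝ} (hφ : ∀ i, ConcaveOn ℝ S (φ i))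
    (hnonneg : ∀ i, ∀ x ∈ S, 0 ≤ φ i x) (hpos : ∀ i, ∃ x ∈ S, 0 < φ i x) :
    ∃ x ∈ S, ∀ i, 0 < φ i x := by
  classical
  suffices ∀ I : Finset ι, ∃ x ∈ S, ∀ i ∈ I, 0 < φ i x by simpa using this Finset.univ
  intro I
  induction I using Finset.induction_on with
  | empty => exact hne.imp fun _ hx => ⟨hx, by simp⟩
  | insert i I _ ih =>
    obtain ⟨x, hxS, hx⟩ := ih
    obtain ⟨y, hyS, hy⟩ := hpos i
    have hmid : ∀ j, 2⁻¹ * φ j x + 2⁻¹ * φ j y ≤ φ j ((2⁻¹ : ℝ) • x + (2⁻¹ : ℝ) • y) :=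
      fun j => (hφ j).2 hxS hyS (by norm_num) (by norm_num) (by norm_num)
    refine ⟨(2⁻¹ : ℝ) • x + (2⁻¹ : ℝ) • y,
      (hφ i).1 hxS hyS (by norm_num) (by norm_num) (by norm_num), fun j hj => ?_⟩
    rcases Finset.mem_insert.1 hj with rfl | hj
    · linarith [hmid j, hnonneg j x hxS]
    · linarith [hmid j, hnonneg j y hyS, hx j hj]

theorem exists_mem_openSegment_of_mem_intrinsicInterior {E : Type*} [NormedAddCommGroup E]
    [NormedSpace ℝ E] {s : Set E} {p q : E} (hp : p ∈ intrinsicInterior ℝ s) (hq : q ∈ s) :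
    ∃ r ∈ s, p ∈ openSegment ℝ r q := by
  obtain ⟨x, hx, rfl⟩ := hp
  let γ : ℝ → affineSpan ℝ s := fun t =>
    ⟨AffineMap.lineMap q (x : E) (1 + t), AffineMap.lineMap_mem _ (subset_affineSpan ℝ s hq) x.2⟩
  have hγ : Continuous γ :=
    (AffineMap.lineMap_continuous.comp (continuous_const.add continuous_id)).subtype_mk _
  have hγ0 : γ 0 = x := Subtype.ext (by simp [γ])
  have hnear : ∀ᶠ t in 𝓝[>] 0, γ t ∈ interior ((↑) ⁻¹' s) :=
    nhdsWithin_le_nhds (hγ.continuousAt.eventually_mem (hγ0 ▸ isOpen_interior.mem_nhds hx))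
  obtain ⟨t, ht, (htpos : 0 < t)⟩ := (hnear.and self_mem_nhdsWithin).exists
  refine ⟨γ t, interior_subset (s := ((↑) : affineSpan ℝ s → E) ⁻¹' s) ht, ?_⟩
  rw [openSegment_symm, openSegment_eq_image_lineMap]
  refine ⟨(1 + t)⁻¹, ⟨by positivity, inv_lt_one_of_one_lt₀ (by linarith)⟩, ?_⟩
  simp only [γ, AffineMap.lineMap_apply_module]
  match_scalars
  · field_simp; ring
  · field_simp

section Polyhedra

variable {m N : ℕ} {d : Fin m → ℕ} {A : (i : Fin m) → Fin (d i) → Fin N → ℝ}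
  {b : (i : Fin m) → Fin (d i) → ℝ} {f : Fin m → ℕ}

theorem convex_Pfront : Convex ℝ (Pfront m N d A b f) := by
  intro p ⟨hpEq, hpZero, hpNonneg⟩ q ⟨hqEq, hqZero, hqNonneg⟩ a c ha hc hac
  refine ⟨fun i j => ?_, fun i j hj => ?_, fun i h => ?_⟩
  · simp only [Prod.fst_add, Prod.snd_add, Prod.smul_fst, Prod.smul_snd, Pi.add_apply,
      Pi.smul_apply, smul_eq_mul, mul_add, Finset.sum_add_distrib, mul_left_comm _ a,
      mul_left_comm _ c, ← Finset.mul_sum]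
    linear_combination a * hpEq i j + c * hqEq i j + b i j * hac
  · simp [hpZero i j hj, hqZero i j hj]
  · simpa using add_nonneg (mul_nonneg ha (hpNonneg i h)) (mul_nonneg hc (hqNonneg i h))

theorem isClosed_Pfront : IsClosed (Pfront m N d A b f) := by
  simp only [Pfront, satEq, Set.ofPred_and, Set.ofPred_forall]
  exact (isClosed_iInter fun i => isClosed_iInter fun j => isClosed_eq (by fun_prop)
    continuous_const).inter ((isClosed_iInter fun i => isClosed_iInter fun j =>
      isClosed_iInter fun _ => isClosed_eq (by fun_prop) continuous_const).inter
    (isClosed_iInter fun i => isClosed_iInter fun _ => isClosed_le continuous_const (by fun_prop)))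

theorem mem_Plex_of_mem_Pfront {z : Pt m N d} (hz : z ∈ Pfront m N d A b f)
    (hpos : ∀ i (h : f i < d i), 0 < z.2 i ⟨f i, h⟩) : z ∈ Plex m N d A b := by
  refine ⟨hz.1, fun i => ?_⟩
  by_cases h : f i < d i
  · exact Or.inr ⟨⟨f i, h⟩, fun k hk => hz.2.1 i k hk, hpos i h⟩
  · exact Or.inl (funext fun j => hz.2.1 i j (j.2.trans_le (not_lt.1 h)))

theorem openSegment_subset_Plex {p q : Pt m N d} (hp : p ∈ Pfront m N d A b f)
    (hq : q ∈ Pfront m N d A b f) (hqpos : ∀ i (h : f i < d i), 0 < q.2 i ⟨f i, h⟩) :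
    openSegment ℝ p q ⊆ Plex m N d A b := by
  rintro _ ⟨a, c, ha, hc, hac, rfl⟩
  refine mem_Plex_of_mem_Pfront (convex_Pfront hp hq ha.le hc.le hac) fun i h => ?_
  simpa using add_pos_of_nonneg_of_pos (mul_nonneg ha.le (hp.2.2 i h)) (mul_pos hc (hqpos i h))

theorem Plex_subset_Pfront (hf : IsMaxFront m N d A b f) :
    Plex m N d A b ⊆ Pfront m N d A b f := fun p hp =>
  ⟨hp.1, fun i => (hf i).1.2 p hp, fun i _ => (hp.2 i).nonneg_of_forall_lt_eq_zero
    fun k hk => (hf i).1.2 p hp k hk⟩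

theorem exists_mem_Plex_pos_of_isMaxFront (hf : IsMaxFront m N d A b f) (i : Fin m)
    (h : f i < d i) : ∃ q ∈ Plex m N d A b, 0 < q.2 i ⟨f i, h⟩ := by
  -- `f i + 1` is not admissible, and the slacks before position `f i` vanish on `P^lex`.
  have hnot : f i + 1 ∉ {j | j ≤ d i ∧ ∀ p ∈ Plex m N d A b, ∀ k : Fin (d i),
      (k : ℕ) < j → p.2 i k = 0} := fun hmem => by have := (hf i).2 hmem; omega
  simp only [Set.mem_ofPred_eq, not_and, not_forall] at hnot
  obtain ⟨q, hq, k, hk, hqk⟩ := hnot h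
  have hk_eq : k = ⟨f i, h⟩ :=
    Fin.ext (le_antisymm (Nat.lt_succ_iff.1 hk) (not_lt.1 fun hlt => hqk ((hf i).1.2 q hq k hlt)))
  subst hk_eq
  exact ⟨q, hq, ((Plex_subset_Pfront hf hq).2.2 i h).lt_of_ne' hqk⟩

theorem exists_mem_Pfront_pos_of_isMaxFront (hf : IsMaxFront m N d A b f)
    (hne : (Pfront m N d A b f).Nonempty) :
    ∃ q ∈ Pfront m N d A b f, ∀ i (h : f i < d i), 0 < q.2 i ⟨f i, h⟩ := by
  obtain ⟨q, hq, hqpos⟩ := exists_forall_pos_of_concaveOn (ι := {i // f i < d i}) hne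
    (φ := fun i q => q.2 i.1 ⟨f i.1, i.2⟩) (fun _ => ⟨convex_Pfront, fun _ _ _ _ _ _ _ _ _ => le_rfl⟩)
    (fun i _ hq => hq.2.2 i.1 i.2)
    (fun i => (exists_mem_Plex_pos_of_isMaxFront hf i.1 i.2).imp
      fun _ hq => ⟨Plex_subset_Pfront hf hq.1, hq.2⟩)
  exact ⟨q, hq, fun i h => hqpos ⟨i, h⟩⟩

end Polyhedra

theorem relint_maxFront_subset_Plex_general (m N : ℕ) (d : Fin m → ℕ)
    (A : (i : Fin m) → Fin (d i) → Fin N → ℝ)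
    (b : (i : Fin m) → Fin (d i) → ℝ) (fstar : Fin m → ℕ)
    (hstar : IsMaxFront m N d A b fstar) :
    intrinsicInterior ℝ (Pfront m N d A b fstar) ⊆ Plex m N d A b ∧
      Plex m N d A b ⊆ Pfront m N d A b fstar ∧
      closure (Plex m N d A b) = Pfront m N d A b fstar := by
  have hsub := Plex_subset_Pfront hstar
  rcases (Pfront m N d A b fstar).eq_empty_or_nonempty with hempty | hne
  · have hPlex : Plex m N d A b = ∅ := Set.subset_empty_iff.1 (hempty ▸ hsub)
    simp [hPlex, hempty]
  obtain ⟨q, hq, hqpos⟩ := exists_mem_Pfront_pos_of_isMaxFront hstar hne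
  refine ⟨fun p hp => ?_, hsub, (closure_minimal hsub isClosed_Pfront).antisymm fun p hp => ?_⟩
  · obtain ⟨r, hr, hpr⟩ := exists_mem_openSegment_of_mem_intrinsicInterior hp hq
    exact openSegment_subset_Plex hr hq hqpos hpr
  · exact closure_mono (openSegment_subset_Plex hp hq hqpos)
      (segment_subset_closure_openSegment (left_mem_segment ℝ p q))

/-- `relint P^{f⋆} ⊆ P^lex ⊆ P^{f⋆}`; equivalently `P^{f⋆}` is the closure of
`P^lex`. -/
theorem relint_maxFront_subset_Plex (m N : ℕ) (d : Fin m → ℕ)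
    (hd : ∀ i, 1 ≤ d i)
    (A : (i : Fin m) → Fin (d i) → Fin N → ℝ)
    (b : (i : Fin m) → Fin (d i) → ℝ) (fstar : Fin m → ℕ)
    (hstar : IsMaxFront m N d A b fstar) :
    intrinsicInterior ℝ (Pfront m N d A b fstar) ⊆ Plex m N d A b ∧
      Plex m N d A b ⊆ Pfront m N d A b fstar ∧
      closure (Plex m N d A b) = Pfront m N d A b fstar :=
  relint_maxFront_subset_Plex_general m N d A b fstar hstar
end

section
/- Let P ∈ ℝ^{n×n} have 1 as a semisimple eigenvalue with biorthogonal bases of right eigenvectors v^1,…,v^q and left eigenvectors m^1,…,m^q (m^k v^l = δ_{kl}). Suppose (ρ, u) ∈ ℝ^n × ℝ^n satisfies ρ = Pρ and u = r + Pu − P̄ρ for given r ∈ ℝ^n and P̄ ∈ ℝ^{n×n}. If the aggregated matrix M̄ = (m^k P̄ v^l)_{k,l ∈ [q]} is invertible, then ρ is uniquely determined: ρ = Σ_k λ_k v^k with λ = M̄^{-1} r̄, where r̄ = (m^k r)_{k ∈ [q]}. -/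
open Matrix

/-- If `1` is a semisimple eigenvalue of `P` with biorthogonal eigenbases
`(v^k)`, `(m^k)` spanning `ker (I - P)`, `(ρ, u)` satisfies `ρ = Pρ` and
`u = r + Pu - P̄ρ`, and the aggregated matrix `M̄ = (m^k P̄ v^l)` is
invertible, then `ρ` is uniquely determined: `ρ = Σ_k λ_k v^k` with
`λ = M̄⁻¹ r̄` and `r̄ = (m^k r)`. -/
theorem throughput_unique (n q : ℕ) (P Pbar : Matrix (Fin n) (Fin n) ℝ)
    (v mv : Fin q → (Fin n → ℝ))
    (hv : ∀ k, P.mulVec (v k) = v k)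
    (hm : ∀ l, Matrix.vecMul (mv l) P = mv l)
    (hbi : ∀ k l, mv k ⬝ᵥ v l = if k = l then (1 : ℝ) else 0)
    (hspan : ∀ w : Fin n → ℝ, P.mulVec w = w →
      w ∈ Submodule.span ℝ (Set.range v))
    (Mbar : Matrix (Fin q) (Fin q) ℝ)
    (hMdef : ∀ k l, Mbar k l = mv k ⬝ᵥ Pbar.mulVec (v l))
    (hMinv : IsUnit Mbar.det)
    (r ρ u : Fin n → ℝ)
    (hρ : ρ = P.mulVec ρ)
    (hu : u = r + P.mulVec u - Pbar.mulVec ρ) :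
    ρ = ∑ k, (Mbar⁻¹.mulVec (fun j => mv j ⬝ᵥ r)) k • v k := by
  obtain ⟨c, hc⟩ := (Submodule.mem_span_range_iff_exists_fun ℝ).mp (hspan ρ hρ.symm)
  -- key: mv k ⬝ᵥ Pbar.mulVec ρ = mv k ⬝ᵥ r
  have key : ∀ k, mv k ⬝ᵥ Pbar.mulVec ρ = mv k ⬝ᵥ r := by
    intro k
    have := congrArg (fun w => mv k ⬝ᵥ w) hu
    simp only [dotProduct_add, dotProduct_sub, Matrix.dotProduct_mulVec, hm k] at this
    rw [Matrix.dotProduct_mulVec]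
    linarith
  have hMc : Mbar.mulVec c = fun j => mv j ⬝ᵥ r := by
    funext k
    have h1 : Pbar.mulVec ρ = ∑ l, c l • Pbar.mulVec (v l) := by
      rw [← hc]
      simp [Matrix.mulVec_sum, Matrix.mulVec_smul]
    have h3 : mv k ⬝ᵥ ∑ l, c l • Pbar.mulVec (v l)
        = ∑ l, c l * (mv k ⬝ᵥ Pbar.mulVec (v l)) := by
      simp only [dotProduct, Finset.sum_apply, Pi.smul_apply, smul_eq_mul,
        Finset.mul_sum]
      rw [Finset.sum_comm]
      apply Finset.sum_congr rfl; intro l _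
      apply Finset.sum_congr rfl; intro i _; ring
    have h2 := key k
    rw [h1, h3] at h2
    rw [Matrix.mulVec, ← h2]
    simp [dotProduct, hMdef, mul_comm]
  have hcinv : c = Mbar⁻¹.mulVec (fun j => mv j ⬝ᵥ r) := by
    rw [← hMc, Matrix.mulVec_mulVec, Matrix.nonsing_inv_mul _ hMinv, Matrix.one_mulVec]
  rw [← hc, hcinv]
end

section
/- If a closed convex polyhedron Q = {(x,s) : Ax + s = b, s^{<f} = 0, s^f ≥ 0} is such that for every inequality index i (with f_i ≤ d_i) there exists a point of Q with s_i^{f_i} > 0, then the relative interior of Q is exactly {(x,s) : Ax + s = b, s^{<f} = 0, s^f > 0}. -/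
/-! The affine hull of `Q` lies in `L = {A x + s = b, s^{<f} = 0}`, and `Q` is cut out of `L` by
the inequalities `s_i^{f_i} ≥ 0`; so where all of them are strict, a neighbourhood of the point in
`L` stays inside `Q`. Conversely, if `p` is relatively interior and `q ∈ Q` has `s_i^{f_i}(q) > 0`,
the segment from `q` through `p` extends a little beyond `p` inside `Q`, and a nonnegative affine
function that is positive at `q` is then positive at `p`. -/

open Set Filter Topology

section IntrinsicInterior

theorem LinearMap.eq_of_mem_affineSpan {𝕜 E F : Type*} [Ring 𝕜] [AddCommGroup E] [Module 𝕜 E]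
    [AddCommGroup F] [Module 𝕜 F] (g : E →ₗ[𝕜] F) {s : Set E} {c : F} (hg : ∀ q ∈ s, g q = c)
    {p : E} (hp : p ∈ affineSpan 𝕜 s) : g p = c :=
  AffineMap.eqOn_affineSpan (f := g.toAffineMap) (g := AffineMap.const 𝕜 E c) hg hp

theorem mem_intrinsicInterior_of_isOpen {𝕜 V P : Type*} [Ring 𝕜] [AddCommGroup V] [Module 𝕜 V]
    [TopologicalSpace P] [AddTorsor V P] {s U : Set P} (hU : IsOpen U)
    (hsU : ∀ q ∈ affineSpan 𝕜 s, q ∈ U → q ∈ s) {p : P} (hp : p ∈ s) (hpU : p ∈ U) :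
    p ∈ intrinsicInterior 𝕜 s :=
  mem_intrinsicInterior.2 ⟨⟨p, subset_affineSpan 𝕜 s hp⟩,
    interior_maximal (fun (q : affineSpan 𝕜 s) hq => hsU q q.2 hq)
      (hU.preimage continuous_subtype_val) hpU, rfl⟩

variable {V P : Type*} [AddCommGroup V] [Module ℝ V] [TopologicalSpace V] [ContinuousSMul ℝ V]
  [TopologicalSpace P] [AddTorsor V P] [IsTopologicalAddTorsor P]

theorem exists_lineMap_mem_of_mem_intrinsicInterior {s : Set P} {p q : P}
    (hp : p ∈ intrinsicInterior ℝ s) (hq : q ∈ affineSpan ℝ s) :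
    ∃ t : ℝ, 1 < t ∧ AffineMap.lineMap q p t ∈ s := by
  obtain ⟨y, hy, rfl⟩ := mem_intrinsicInterior.1 hp
  let γ : ℝ → affineSpan ℝ s := fun t => ⟨AffineMap.lineMap q y t, AffineMap.lineMap_mem t hq y.2⟩
  have hγ : Continuous γ := AffineMap.lineMap_continuous.subtype_mk _
  have hγ1 : γ 1 = y := Subtype.ext (AffineMap.lineMap_apply_one _ _)
  have hnear : ∀ᶠ t in 𝓝[>] (1 : ℝ), γ t ∈ interior (((↑) : affineSpan ℝ s → P) ⁻¹' s) :=
    eventually_nhdsWithin_of_eventually_nhds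
      (hγ.continuousAt.preimage_mem_nhds (hγ1 ▸ isOpen_interior.mem_nhds hy))
  obtain ⟨t, ht, hts⟩ := (hnear.and self_mem_nhdsWithin).exists
  exact ⟨t, hts, interior_subset (s := ((↑) : affineSpan ℝ s → P) ⁻¹' s) ht⟩

theorem AffineMap.pos_of_mem_intrinsicInterior {s : Set P} (g : P →ᵃ[ℝ] ℝ)
    (hg : ∀ r ∈ s, 0 ≤ g r) {q : P} (hq : q ∈ s) (hgq : 0 < g q) {p : P}
    (hp : p ∈ intrinsicInterior ℝ s) : 0 < g p := by
  obtain ⟨t, ht, hts⟩ := exists_lineMap_mem_of_mem_intrinsicInterior hp (subset_affineSpan ℝ s hq)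
  have h := hg _ hts
  rw [AffineMap.apply_lineMap, AffineMap.lineMap_apply_module, smul_eq_mul, smul_eq_mul] at h
  nlinarith

end IntrinsicInterior

section Pfront

variable {m N : ℕ} {d : Fin m → ℕ}

def slackCoord (i : Fin m) (j : Fin (d i)) : Pt m N d →ₗ[ℝ] ℝ :=
  LinearMap.proj j ∘ₗ LinearMap.proj i ∘ₗ LinearMap.snd ℝ _ _

def satEqLHS (A : (i : Fin m) → Fin (d i) → Fin N → ℝ) (i : Fin m) (j : Fin (d i)) :
    Pt m N d →ₗ[ℝ] ℝ :=
  ∑ k, A i j k • (LinearMap.proj k ∘ₗ LinearMap.fst ℝ _ _) + slackCoord i j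

@[simp]
theorem slackCoord_apply (i : Fin m) (j : Fin (d i)) (p : Pt m N d) :
    slackCoord i j p = p.2 i j := rfl

@[simp]
theorem satEqLHS_apply (A : (i : Fin m) → Fin (d i) → Fin N → ℝ) (i : Fin m) (j : Fin (d i))
    (p : Pt m N d) : satEqLHS A i j p = (∑ k, A i j k * p.1 k) + p.2 i j := by
  simp [satEqLHS]

variable {A : (i : Fin m) → Fin (d i) → Fin N → ℝ} {b : (i : Fin m) → Fin (d i) → ℝ}
  {f : Fin m → ℕ}

theorem satEq_and_slack_zero_of_mem_affineSpan_Pfront {p : Pt m N d}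
    (hp : p ∈ affineSpan ℝ (Pfront m N d A b f)) :
    satEq m N d A b p ∧ ∀ i, ∀ j : Fin (d i), (j : ℕ) < f i → p.2 i j = 0 := by
  refine ⟨fun i j => ?_, fun i j hj => ?_⟩
  · simpa using (satEqLHS A i j).eq_of_mem_affineSpan (fun q hq => by simpa using hq.1 i j) hp
  · simpa using (slackCoord i j).eq_of_mem_affineSpan (fun q hq => by simpa using hq.2.1 i j hj) hp

theorem isOpen_setOf_front_pos (f : Fin m → ℕ) :
    IsOpen {p : Pt m N d | ∀ i, ∀ h : f i < d i, 0 < p.2 i ⟨f i, h⟩} := by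
  simp only [ofPred_forall]
  exact isOpen_iInter_of_finite fun i => isOpen_iInter_of_finite fun h =>
    isOpen_lt continuous_const (by fun_prop)

end Pfront

theorem relint_Pfront_general (m N : ℕ) (d : Fin m → ℕ)
    (A : (i : Fin m) → Fin (d i) → Fin N → ℝ)
    (b : (i : Fin m) → Fin (d i) → ℝ) (f : Fin m → ℕ)
    (hne : ∀ i, ∀ h : f i < d i,
      ∃ p ∈ Pfront m N d A b f, 0 < p.2 i ⟨f i, h⟩) :
    intrinsicInterior ℝ (Pfront m N d A b f) =
      {p | satEq m N d A b p ∧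
        (∀ i, ∀ j : Fin (d i), (j : ℕ) < f i → p.2 i j = 0) ∧
        (∀ i, ∀ h : f i < d i, 0 < p.2 i ⟨f i, h⟩)} := by
  ext p
  constructor
  · intro hp
    obtain ⟨hpeq, hpzero, -⟩ := intrinsicInterior_subset hp
    refine ⟨hpeq, hpzero, fun i h => ?_⟩
    obtain ⟨q, hq, hqpos⟩ := hne i h
    exact (slackCoord i ⟨f i, h⟩).toAffineMap.pos_of_mem_intrinsicInterior
      (fun r hr => hr.2.2 i h) hq hqpos hp
  · rintro ⟨hpeq, hpzero, hpos⟩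
    refine mem_intrinsicInterior_of_isOpen (isOpen_setOf_front_pos f) (fun q hq hqpos => ?_)
      ⟨hpeq, hpzero, fun i h => (hpos i h).le⟩ hpos
    obtain ⟨hqeq, hqzero⟩ := satEq_and_slack_zero_of_mem_affineSpan_Pfront hq
    exact ⟨hqeq, hqzero, fun i h => (hqpos i h).le⟩

/-- If no inequality `s_i^{f i} ≥ 0` is implicitly an equality on `Q = P^f`,
then the relative interior of `Q` is obtained by turning these inequalities
into strict ones. -/
theorem relint_Pfront (m N : ℕ) (d : Fin m → ℕ) (hd : ∀ i, 1 ≤ d i)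
    (A : (i : Fin m) → Fin (d i) → Fin N → ℝ)
    (b : (i : Fin m) → Fin (d i) → ℝ) (f : Fin m → ℕ) (hf : IsFront m d f)
    (hne : ∀ i, ∀ h : f i < d i,
      ∃ p ∈ Pfront m N d A b f, 0 < p.2 i ⟨f i, h⟩) :
    intrinsicInterior ℝ (Pfront m N d A b f) =
      {p | satEq m N d A b p ∧
        (∀ i, ∀ j : Fin (d i), (j : ℕ) < f i → p.2 i j = 0) ∧
        (∀ i, ∀ h : f i < d i, 0 < p.2 i ⟨f i, h⟩)} :=
  relint_Pfront_general m N d A b f hne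
end
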